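/- Let B = [[α₁, r, s], [0, α₂, t], [0, 0, α₃]] ∈ ℂ^{3×3} and assume no two of the entries r, s, t vanish simultaneously. If r·s·t = 0, then for every λ ∈ ℂ that is not an eigenvalue of B (i.e., λ ∉ {α₁, α₂, α₃}), the three eigenvalues of the Hermitian matrix (λI − B)ᴴ(λI − B) are pairwise distinct; i.e., all three singular values of λI − B are simple. -/

import Mathlib

/-!
If the Hermitian matrix `G = (λI - B)ᴴ (λI - B)` had a repeated eigenvalue `μ`, the spectral
theorem would make `G - μI` of rank at most one, so all its `2 × 2` minors would vanish. With
`a = λ - α₁ ≠ 0`, `b = λ - α₂ ≠ 0` and exactly one of `r, s, t` zero, some minor is a product of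
nonzero factors: for `r = 0` or `s = 0` a single off-diagonal minor already is; for `t = 0` the
minor on rows `{1, 2}`, columns `{2, 3}` equals `-ā s (μ - |b|²)`, and when `μ = |b|²` the leading
minor equals `-|b|² |r|²`.
-/

open Matrix
open scoped ComplexConjugate

/-- The eigenvalues (squares of the singular values) of `λI - B`, i.e. the eigenvalues
of the Hermitian matrix `(λI - B)ᴴ (λI - B)`, counted with multiplicity. -/
noncomputable def sqSingVals {n : ℕ} (B : Matrix (Fin n) (Fin n) ℂ) (lam : ℂ) :
    Fin n → ℝ :=
  (Matrix.isHermitian_conjTranspose_mul_self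
    (lam • (1 : Matrix (Fin n) (Fin n) ℂ) - B)).eigenvalues

theorem Matrix.IsHermitian.rank_sub_smul_one_add_two_le {𝕜 n : Type*} [RCLike 𝕜] [Fintype n]
    [DecidableEq n] {A : Matrix n n 𝕜} (hA : A.IsHermitian) {i j : n} (hij : i ≠ j)
    (h : hA.eigenvalues i = hA.eigenvalues j) :
    (A - (hA.eigenvalues i : 𝕜) • 1).rank + 2 ≤ Fintype.card n := by
  set μ := hA.eigenvalues i
  have hdiag : A - (μ : 𝕜) • 1 = Unitary.conjStarAlgAut 𝕜 _ hA.eigenvectorUnitary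
      (diagonal fun k ↦ (hA.eigenvalues k : 𝕜) - μ) := by
    rw [← diagonal_sub, map_sub, ← smul_one_eq_diagonal, map_smul, map_one]
    exact congrArg (· - _) hA.spectral_theorem
  have hrank : (A - (μ : 𝕜) • 1).rank =
      (Finset.univ.filter fun k ↦ (hA.eigenvalues k : 𝕜) - μ ≠ 0).card := by
    rw [hdiag, Unitary.conjStarAlgAut_apply, ← Unitary.coe_star, ← Fintype.card_subtype,
      ← rank_diagonal]
    simp [-isUnit_iff_ne_zero, -Unitary.coe_star]
  have hsub : (Finset.univ.filter fun k ↦ (hA.eigenvalues k : 𝕜) - μ ≠ 0) ⊆ {i, j}ᶜ := by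
    intro k
    simp only [Finset.mem_filter, Finset.mem_compl, Finset.mem_insert, Finset.mem_singleton]
    rintro ⟨-, hk⟩ (rfl | rfl) <;> simp [μ, h] at hk
  have hcard := Finset.card_le_card hsub
  rw [Finset.card_compl, Finset.card_pair hij] at hcard
  have hn : 2 ≤ Fintype.card n := by
    simpa [Finset.card_pair hij] using Finset.card_le_univ {i, j}
  omega

theorem Matrix.two_le_rank_of_mul_sub_mul_ne_zero {K m n : Type*} [Field K] [Fintype n]
    (A : Matrix m n K) (p q : m) (c d : n) (h : A p c * A q d - A p d * A q c ≠ 0) :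
    2 ≤ A.rank := by
  have hunit : IsUnit (A.submatrix ![p, q] ![c, d]) := by
    rw [isUnit_iff_isUnit_det, det_fin_two]
    simpa using h.isUnit
  have := rank_submatrix_le A ![p, q] ![c, d]
  rwa [rank_of_isUnit _ hunit, Fintype.card_fin] at this

theorem conjTranspose_mul_self_upperTriangular_three_sub_smul_one (a b c x y z μ : ℂ) :
    (!![a, x, y; 0, b, z; 0, 0, c])ᴴ * !![a, x, y; 0, b, z; 0, 0, c] - μ • 1 =
      !![conj a * a - μ, conj a * x, conj a * y;
        conj x * a, conj x * x + conj b * b - μ, conj x * y + conj b * z;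
        conj y * a, conj y * x + conj z * b, conj y * y + conj z * z + conj c * c - μ] := by
  ext i j
  fin_cases i <;> fin_cases j <;> simp [mul_apply, Fin.sum_univ_three]

theorem two_le_rank_conjTranspose_mul_self_upperTriangular_three_sub (a b c x y z μ : ℂ)
    (ha : a ≠ 0) (hb : b ≠ 0) (hxy : ¬(x = 0 ∧ y = 0)) (hxz : ¬(x = 0 ∧ z = 0))
    (hyz : ¬(y = 0 ∧ z = 0)) (hxyz : x * y * z = 0) :
    2 ≤ ((!![a, x, y; 0, b, z; 0, 0, c])ᴴ * !![a, x, y; 0, b, z; 0, 0, c] - μ • 1).rank := by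
  have hG := conjTranspose_mul_self_upperTriangular_three_sub_smul_one a b c x y z μ
  set G := (!![a, x, y; 0, b, z; 0, 0, c])ᴴ * !![a, x, y; 0, b, z; 0, 0, c] - μ • 1
  rcases mul_eq_zero.1 hxyz with hxy0 | hz
  · rcases mul_eq_zero.1 hxy0 with hx | hy
    · have hy : y ≠ 0 := fun hy ↦ hxy ⟨hx, hy⟩
      have hz : z ≠ 0 := fun hz ↦ hxz ⟨hx, hz⟩
      refine G.two_le_rank_of_mul_sub_mul_ne_zero 0 2 1 2 ?_
      have : G 0 1 * G 2 2 - G 0 2 * G 2 1 = -(conj a * y * (conj z * b)) := by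
        simp only [hG, of_apply, cons_val, hx]
        ring
      simp [this, ha, hb, hy, hz]
    · have hx : x ≠ 0 := fun hx ↦ hxy ⟨hx, hy⟩
      have hz : z ≠ 0 := fun hz ↦ hyz ⟨hy, hz⟩
      refine G.two_le_rank_of_mul_sub_mul_ne_zero 0 1 1 2 ?_
      have : G 0 1 * G 1 2 - G 0 2 * G 1 1 = conj a * x * (conj b * z) := by
        simp only [hG, of_apply, cons_val, hy]
        ring
      simp [this, ha, hb, hx, hz]
  · have hx : x ≠ 0 := fun hx ↦ hxz ⟨hx, hz⟩
    have hy : y ≠ 0 := fun hy ↦ hyz ⟨hy, hz⟩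
    by_cases hμ : μ = conj b * b
    · refine G.two_le_rank_of_mul_sub_mul_ne_zero 0 1 0 1 ?_
      have : G 0 0 * G 1 1 - G 0 1 * G 1 0 = -(conj b * b * (conj x * x)) := by
        simp only [hG, of_apply, cons_val, hμ]
        ring
      simp [this, hb, hx]
    · refine G.two_le_rank_of_mul_sub_mul_ne_zero 0 1 1 2 ?_
      have : G 0 1 * G 1 2 - G 0 2 * G 1 1 = conj a * y * (μ - conj b * b) := by
        simp only [hG, of_apply, cons_val, hz]
        ring
      simp [this, ha, hy, sub_eq_zero, hμ]

/-- For `B = [[α₁, r, s], [0, α₂, t], [0, 0, α₃]]` in which no two of `r, s, t` vanish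
simultaneously but `r·s·t = 0`, all three singular values of `λI - B` are simple for
every `λ` that is not an eigenvalue of `B`. -/
theorem triangular_three_by_three_rst_zero_simple_singular_values
    (α₁ α₂ α₃ r s t : ℂ)
    (hrs : ¬(r = 0 ∧ s = 0)) (hrt : ¬(r = 0 ∧ t = 0)) (hst : ¬(s = 0 ∧ t = 0))
    (hrst : r * s * t = 0) :
    ∀ lam : ℂ, lam ≠ α₁ → lam ≠ α₂ → lam ≠ α₃ →
      Function.Injective (sqSingVals !![α₁, r, s; 0, α₂, t; 0, 0, α₃] lam) := by
  intro lam h₁ h₂ _ i j hij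
  by_contra hne
  set T := lam • (1 : Matrix (Fin 3) (Fin 3) ℂ) - !![α₁, r, s; 0, α₂, t; 0, 0, α₃]
  have hT : T = !![lam - α₁, -r, -s; 0, lam - α₂, -t; 0, 0, lam - α₃] := by
    ext i j
    fin_cases i <;> fin_cases j <;> simp [T]
  have hM := isHermitian_conjTranspose_mul_self T
  have hcorank := hM.rank_sub_smul_one_add_two_le hne hij
  have hrank := two_le_rank_conjTranspose_mul_self_upperTriangular_three_sub
    (lam - α₁) (lam - α₂) (lam - α₃) (-r) (-s) (-t) (RCLike.ofReal (hM.eigenvalues i))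
    (sub_ne_zero.2 h₁) (sub_ne_zero.2 h₂) (by simpa using hrs) (by simpa using hrt)
    (by simpa using hst) (by linear_combination -hrst)
  rw [← hT] at hrank
  rw [Fintype.card_fin] at hcorank
  omega
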